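/- arXiv:0812.0165 — 2 statements merged into one kernel-verified Lean document; each statement's English description precedes it below -/
import Mathlib

section
/- If α := e^{-(π/2)μ²Λ²} ≤ 1/4 where μ = min(a, β) and a, β, Λ > 0, then ∑_{(n,m)∈ℤ², (n,m)≠(0,0)} e^{-(π/2)((nΛa)² + (mΛβ)²)} ≤ 8 e^{-(π/2)(μΛ)²}. -/
/-!
With `q = exp (-(π/2) (μΛ)²)`, each term is at most `q ^ (n² + m²) ≤ q ^ (|n| + |m|)`, and the
geometric majorant sums to `((1 + q)/(1 - q))² - 1 = 4q/(1 - q)²`, which is at most `8q`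
once `q ≤ 1/4`.
-/

open Real

theorem HasSum.subtype_ne {α β : Type*} [AddCommGroup α] [TopologicalSpace α]
    [IsTopologicalAddGroup α] [DecidableEq β] {f : β → α} {a : α} (hf : HasSum f a) (b : β) :
    HasSum (fun x : {x // x ≠ b} => f x) (a - f b) := by
  refine .congr_fun ((hasSum_subtype_iff_of_support_subset (s := {x | x ≠ b}) ?_).2
    (hasSum_ite_sub_hasSum hf b)) fun x => (if_neg x.2).symm
  exact fun x hx h => hx (if_pos h)

theorem hasSum_pow_natAbs {q : ℝ} (hq0 : 0 ≤ q) (hq1 : q < 1) :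
    HasSum (fun n : ℤ => q ^ n.natAbs) ((1 + q) / (1 - q)) := by
  have hgeom := hasSum_geometric_of_lt_one hq0 hq1
  have hvalue : (1 + q) / (1 - q) = (1 - q)⁻¹ + (1 - q)⁻¹ - q ^ (0 : ℤ).natAbs := by
    field_simp [(sub_pos.2 hq1).ne']
    ring
  rw [hvalue]
  exact .of_nat_of_neg (by simpa using hgeom) (by simpa using hgeom)

theorem hasSum_pow_natAbs_mul_pow_natAbs_ne_zero {q : ℝ} (hq0 : 0 ≤ q) (hq1 : q < 1) :
    HasSum (fun p : {p : ℤ × ℤ // p ≠ 0} => q ^ p.1.1.natAbs * q ^ p.1.2.natAbs)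
      (((1 + q) / (1 - q)) ^ 2 - 1) := by
  have h := hasSum_pow_natAbs hq0 hq1
  have hprod := h.mul h (h.summable.mul_of_nonneg h.summable (fun _ => by positivity)
    (fun _ => by positivity))
  simpa [sq] using hprod.subtype_ne 0

theorem exp_neg_mul_sq_le_pow_natAbs {c s t : ℝ} (hc : 0 ≤ c) (hst : s ^ 2 ≤ t ^ 2) (n : ℤ) :
    exp (-c * (n * t) ^ 2) ≤ exp (-c * s ^ 2) ^ n.natAbs := by
  rw [← exp_nat_mul, exp_le_exp]
  have hn : (n.natAbs : ℝ) ≤ (n : ℝ) ^ 2 := by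
    rw [Nat.cast_natAbs]
    exact_mod_cast Int.natAbs_le_self_sq n
  have : (n.natAbs : ℝ) * s ^ 2 ≤ n ^ 2 * t ^ 2 := mul_le_mul hn hst (sq_nonneg s) (sq_nonneg _)
  nlinarith

theorem one_add_div_one_sub_sq_sub_one_le {q : ℝ} (hq0 : 0 ≤ q) (hq : q ≤ 1 / 4) :
    ((1 + q) / (1 - q)) ^ 2 - 1 ≤ 8 * q := by
  have h : 0 < 1 - q := by linarith
  rw [div_pow, sub_le_iff_le_add, div_le_iff₀ (by positivity)]
  nlinarith [mul_nonneg hq0 (sub_nonneg.2 hq), mul_nonneg hq0 (sq_nonneg q)]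

theorem gaussian_lattice_sum_bound_general (a β Λ : ℝ) (ha : 0 < a) (hβ : 0 < β)
    (hsmall : Real.exp (-(Real.pi / 2) * (min a β * Λ) ^ 2) ≤ 1 / 4) :
    ∑' p : {p : ℤ × ℤ // p ≠ 0},
        Real.exp (-(Real.pi / 2) *
          (((p.1.1 : ℝ) * Λ * a) ^ 2 + ((p.1.2 : ℝ) * Λ * β) ^ 2)) ≤
      8 * Real.exp (-(Real.pi / 2) * (min a β * Λ) ^ 2) := by
  set q := exp (-(π / 2) * (min a β * Λ) ^ 2)
  have hq0 : 0 ≤ q := (exp_pos _).le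
  have hmajorant := hasSum_pow_natAbs_mul_pow_natAbs_ne_zero hq0 (hsmall.trans_lt (by norm_num))
  have hsq {t : ℝ} (ht : min a β ≤ t) : (min a β * Λ) ^ 2 ≤ (Λ * t) ^ 2 := by
    rw [mul_pow, mul_pow, mul_comm (Λ ^ 2)]
    gcongr
  have hπ : 0 ≤ π / 2 := by positivity
  have hterm (p : {p : ℤ × ℤ // p ≠ 0}) :
      exp (-(π / 2) * ((p.1.1 * Λ * a) ^ 2 + (p.1.2 * Λ * β) ^ 2)) ≤
        q ^ p.1.1.natAbs * q ^ p.1.2.natAbs := by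
    rw [mul_add, exp_add, mul_assoc _ Λ a, mul_assoc _ Λ β]
    exact mul_le_mul (exp_neg_mul_sq_le_pow_natAbs hπ (hsq (min_le_left a β)) _)
      (exp_neg_mul_sq_le_pow_natAbs hπ (hsq (min_le_right a β)) _) (exp_pos _).le (by positivity)
  have hsum := hmajorant.summable.of_nonneg_of_le (fun _ => (exp_pos _).le) hterm
  calc _ ≤ ((1 + q) / (1 - q)) ^ 2 - 1 := hasSum_le hterm hsum.hasSum hmajorant
    _ ≤ 8 * q := one_add_div_one_sub_sq_sub_one_le hq0 hsmall

/-- Gaussian lattice sum bound: if `e^{-(π/2)(μΛ)²} ≤ 1/4` with `μ = min(a,β)`,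
then `∑_{(n,m)≠(0,0)} e^{-(π/2)((nΛa)² + (mΛβ)²)} ≤ 8 e^{-(π/2)(μΛ)²}`. -/
theorem gaussian_lattice_sum_bound (a β Λ : ℝ) (ha : 0 < a) (hβ : 0 < β) (hΛ : 0 < Λ)
    (hsmall : Real.exp (-(Real.pi / 2) * (min a β * Λ) ^ 2) ≤ 1 / 4) :
    ∑' p : {p : ℤ × ℤ // p ≠ 0},
        Real.exp (-(Real.pi / 2) *
          (((p.1.1 : ℝ) * Λ * a) ^ 2 + ((p.1.2 : ℝ) * Λ * β) ^ 2)) ≤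
      8 * Real.exp (-(Real.pi / 2) * (min a β * Λ) ^ 2) :=
  gaussian_lattice_sum_bound_general a β Λ ha hβ hsmall
end

section
/- For every λ > 1 there is a constant C_λ such that for all n ≥ 0, 2∫_0^∞ u^{2n+1} e^{-(u−1)²} du ≤ C_λ λ^n n!. -/
open MeasureTheory Real Set

open scoped Nat

/-! The Gaussian bump centred at `1` is dominated by a flatter one centred at `0`:
`e^{-(u-1)²} ≤ e^{b/(1-b)} e^{-b u²}` for `b < 1`. Against `e^{-b u²}` the odd moments are
explicit, `∫_0^∞ u^{2n+1} e^{-b u²} du = n! / (2 b^{n+1})`, and `b = λ⁻¹` gives the bound. -/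

lemma integrableOn_pow_mul_exp_neg_mul_sq {b : ℝ} (hb : 0 < b) (k : ℕ) :
    IntegrableOn (fun u : ℝ => u ^ k * exp (-b * u ^ 2)) (Ioi 0) := by
  simpa only [rpow_natCast] using
    integrableOn_rpow_mul_exp_neg_mul_sq hb (s := k) (neg_one_lt_zero.trans_le k.cast_nonneg)

lemma integral_Ioi_pow_odd_mul_exp_neg_mul_sq {b : ℝ} (hb : 0 < b) (n : ℕ) :
    ∫ u in Ioi (0 : ℝ), u ^ (2 * n + 1) * exp (-b * u ^ 2) = n ! / (2 * b ^ (n + 1)) := by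
  have hq : (-1 : ℝ) < ((2 * n + 1 : ℕ) : ℝ) := neg_one_lt_zero.trans_le (Nat.cast_nonneg _)
  have key := integral_rpow_mul_exp_neg_mul_rpow two_pos hq hb
  simp only [rpow_natCast, rpow_two] at key
  have hexp : (((2 * n + 1 : ℕ) : ℝ) + 1) / 2 = ((n + 1 : ℕ) : ℝ) := by push_cast; ring
  rw [key, neg_div, hexp, rpow_neg hb.le, rpow_natCast, Nat.cast_succ, Gamma_nat_eq_factorial]
  field_simp

lemma exp_neg_sub_one_sq_le {b : ℝ} (hb1 : b < 1) (u : ℝ) :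
    exp (-(u - 1) ^ 2) ≤ exp (b / (1 - b)) * exp (-b * u ^ 2) := by
  rw [← exp_add, exp_le_exp]
  have hb1' : 1 - b ≠ 0 := by linarith
  have hgap : b / (1 - b) + -b * u ^ 2 - -(u - 1) ^ 2 = ((1 - b) * u - 1) ^ 2 / (1 - b) := by
    field_simp
    ring
  have : 0 ≤ ((1 - b) * u - 1) ^ 2 / (1 - b) := div_nonneg (sq_nonneg _) (by linarith)
  linarith

lemma integral_Ioi_pow_odd_mul_exp_neg_sub_one_sq_le {b : ℝ} (hb0 : 0 < b) (hb1 : b < 1)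
    (n : ℕ) :
    ∫ u in Ioi (0 : ℝ), u ^ (2 * n + 1) * exp (-(u - 1) ^ 2) ≤
      exp (b / (1 - b)) * (n ! / (2 * b ^ (n + 1))) := by
  rw [← integral_Ioi_pow_odd_mul_exp_neg_mul_sq hb0, ← integral_const_mul]
  refine integral_mono_of_nonneg ?_ ((integrableOn_pow_mul_exp_neg_mul_sq hb0 _).const_mul _) ?_
  · filter_upwards [ae_restrict_mem measurableSet_Ioi] with u (hu : 0 < u)
    positivity
  · filter_upwards [ae_restrict_mem measurableSet_Ioi] with u (hu : 0 < u)
    calc u ^ (2 * n + 1) * exp (-(u - 1) ^ 2)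
        ≤ u ^ (2 * n + 1) * (exp (b / (1 - b)) * exp (-b * u ^ 2)) := by
          gcongr
          exact exp_neg_sub_one_sq_le hb1 u
      _ = exp (b / (1 - b)) * (u ^ (2 * n + 1) * exp (-b * u ^ 2)) := by ring

/-- For every `λ > 1` there is a constant `C` such that for all `n`,
`2 ∫_0^∞ u^{2n+1} e^{-(u-1)²} du ≤ C λ^n n!`. -/
theorem moment_integral_estimate (lam : ℝ) (hlam : 1 < lam) :
    ∃ C : ℝ, ∀ n : ℕ,
      2 * (∫ u in Set.Ioi (0 : ℝ), u ^ (2 * n + 1) * Real.exp (-(u - 1) ^ 2)) ≤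
        C * lam ^ n * n.factorial := by
  have hlam0 : 0 < lam := one_pos.trans hlam
  refine ⟨lam * exp (lam⁻¹ / (1 - lam⁻¹)), fun n => ?_⟩
  have hbound := integral_Ioi_pow_odd_mul_exp_neg_sub_one_sq_le (inv_pos.mpr hlam0)
    (inv_lt_one_of_one_lt₀ hlam) n
  calc 2 * (∫ u in Ioi (0 : ℝ), u ^ (2 * n + 1) * exp (-(u - 1) ^ 2))
      ≤ 2 * (exp (lam⁻¹ / (1 - lam⁻¹)) * (n ! / (2 * lam⁻¹ ^ (n + 1)))) := by gcongr
    _ = lam * exp (lam⁻¹ / (1 - lam⁻¹)) * lam ^ n * n ! := by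
      rw [inv_pow]
      field_simp
      ring
end
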